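/- arXiv:2509.14467 — 2 statements merged into one kernel-verified Lean document; each statement's English description precedes it below -/
import Mathlib

section
/- For a Dyck path of semi-length N with exactly m returns to the x-axis at positions 0 = r_0 < r_1 < ... < r_m = 2N, setting k_i = (r_i − r_{i−1})/2, the area satisfies a(w) ≤ (1/2)·∑_{i=1}^m k_i(k_i − 1), and hence the area deficit satisfies N(N−1)/2 − a(w) ≥ (m−1)(N − m/2). -/
open Finset

/-- Height of a ±1 path after `k` steps (`true` = up-step, `false` = down-step). -/
def dheight (w : List Bool) (k : ℕ) : ℤ :=
  ((w.take k).map (fun b => if b then (1 : ℤ) else -1)).sum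

/-- A Dyck path: heights stay nonnegative and the path ends at height 0. -/
def IsDyck (w : List Bool) : Prop :=
  (∀ k ∈ Finset.range (w.length + 1), 0 ≤ dheight w k) ∧ dheight w w.length = 0

/-- The area (number of full lattice squares) under a Dyck path:
`a(w) = (∑_{k=1}^{2N} h_k - N) / 2`. -/
def darea (w : List Bool) : ℤ :=
  ((∑ k ∈ Finset.range w.length, dheight w (k + 1)) - (w.length : ℤ) / 2) / 2

/-- Number of returns of the path to height zero (endpoint counted, start not). -/
def dreturns (w : List Bool) : ℕ :=
  ((Finset.Icc 1 w.length).filter (fun k => dheight w k = 0)).card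

-- The q-s Catalan number `G_N(q,s) = ∑_{w ∈ D_N} q^{a(w)} s^{m(w)}`.
open scoped Classical in
noncomputable def Gqs (N : ℕ) (q s : ℝ) : ℝ :=
  ∑ f : Fin (2 * N) → Bool,
    if IsDyck (List.ofFn f)
    then q ^ (darea (List.ofFn f)).toNat * s ^ dreturns (List.ofFn f)
    else 0

/-!
Cut the path at its returns `r_0 < ⋯ < r_m`. A height has the parity of its position, so
`r_i = r_{i-1} + 2 k_i` with `k_i ≥ 1`. On each block the heights form a ±1 walk from `0` to `0`,
so pairing position `r_{i-1} + j` with `r_{i-1} + k_i + j` bounds each pair by `j + (k_i - j) = k_i`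
and the block's height sum by `k_i²`. As `2 a(w) ≤ ∑ heights - N` and `∑ k_i = N`, this is the
first bound. For the second, `k_i ≥ 1` for all `i` forces `k_i ≤ N - m + 1`, whence
`∑ k_i (k_i - 1) ≤ (N - m + 1) ∑ (k_i - 1) = (N - m + 1)(N - m)`.
-/

lemma abs_sub_le_of_abs_succ_sub_le {f : ℕ → ℤ} (hf : ∀ k, |f (k + 1) - f k| ≤ 1)
    {a b : ℕ} (hab : a ≤ b) : |f b - f a| ≤ b - a := by
  induction b, hab using Nat.le_induction with
  | base => simp
  | succ n _ ih =>
    calc |f (n + 1) - f a| ≤ |f (n + 1) - f n| + |f n - f a| := abs_sub_le _ _ _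
      _ ≤ 1 + (n - a) := add_le_add (hf n) ih
      _ = ((n + 1 : ℕ) : ℤ) - a := by push_cast; ring

lemma sum_Ioc_le_sq_of_abs_succ_sub_le {f : ℕ → ℤ} (hf : ∀ k, |f (k + 1) - f k| ≤ 1)
    {a c : ℕ} (ha : f a = 0) (hc : f (a + 2 * c) = 0) :
    ∑ k ∈ Ioc a (a + 2 * c), f k ≤ c ^ 2 := by
  have hpair : ∀ j ∈ Ioc 0 c, f (a + j) + f (a + c + j) ≤ c := by
    intro j hj
    rw [mem_Ioc] at hj
    have hup := abs_le.mp (abs_sub_le_of_abs_succ_sub_le hf (a := a) (b := a + j) (by omega))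
    have hdown := abs_le.mp
      (abs_sub_le_of_abs_succ_sub_le hf (a := a + c + j) (b := a + 2 * c) (by omega))
    rw [ha] at hup
    rw [hc] at hdown
    push_cast at hup hdown
    linarith [hup.2, hdown.1]
  have hshift (b : ℕ) : ∑ k ∈ Ioc b (b + c), f k = ∑ j ∈ Ioc 0 c, f (b + j) := by
    simpa using sum_map (Ioc 0 c) (addLeftEmbedding b) f
  calc ∑ k ∈ Ioc a (a + 2 * c), f k
      = ∑ k ∈ Ioc a (a + c), f k + ∑ k ∈ Ioc (a + c) (a + c + c), f k := by
        rw [sum_Ioc_consecutive _ (by omega) (by omega), two_mul, add_assoc]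
    _ = ∑ j ∈ Ioc 0 c, (f (a + j) + f (a + c + j)) := by
        rw [hshift, hshift, sum_add_distrib]
    _ ≤ ∑ _j ∈ Ioc 0 c, (c : ℤ) := sum_le_sum hpair
    _ = c ^ 2 := by simp [sq]

lemma sum_Ioc_eq_sum_Icc_sum_Ioc {M : Type*} [AddCommMonoid M] (g : ℕ → M) {r : ℕ → ℕ} {m : ℕ}
    (hr : MonotoneOn r (Set.Icc 0 m)) :
    ∑ i ∈ Icc 1 m, ∑ k ∈ Ioc (r (i - 1)) (r i), g k = ∑ k ∈ Ioc (r 0) (r m), g k := by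
  induction m with
  | zero => simp
  | succ n ih =>
    rw [sum_Icc_succ_top (by omega), ih (hr.mono (Set.Icc_subset_Icc le_rfl (by omega))),
      Nat.add_sub_cancel]
    exact sum_Ioc_consecutive g (hr ⟨le_rfl, by omega⟩ ⟨by omega, by omega⟩ (by omega))
      (hr ⟨by omega, by omega⟩ ⟨by omega, le_rfl⟩ (by omega))

lemma sum_Icc_sub_pred {G : Type*} [AddCommGroup G] (f : ℕ → G) (m : ℕ) :
    ∑ i ∈ Icc 1 m, (f i - f (i - 1)) = f m - f 0 := by
  induction m with
  | zero => simp
  | succ n ih =>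
    rw [sum_Icc_succ_top (by omega), ih, Nat.add_sub_cancel]
    abel

lemma sum_mul_sub_one_le {ι : Type*} (s : Finset ι) (x : ι → ℝ) (hx : ∀ i ∈ s, 1 ≤ x i) :
    ∑ i ∈ s, x i * (x i - 1) ≤ (∑ i ∈ s, x i + 1 - #s) * (∑ i ∈ s, x i - #s) := by
  classical
  set T := ∑ i ∈ s, x i
  have hle : ∀ i ∈ s, x i ≤ T + 1 - #s := by
    intro i hi
    have hrest : ((#s - 1 : ℕ) : ℝ) ≤ ∑ j ∈ s.erase i, x j := by
      simpa [card_erase_of_mem hi] using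
        card_nsmul_le_sum (s.erase i) x 1 fun j hj => hx j (mem_of_mem_erase hj)
    rw [Nat.cast_sub (card_pos.mpr ⟨i, hi⟩), Nat.cast_one] at hrest
    linarith [add_sum_erase s x hi]
  calc ∑ i ∈ s, x i * (x i - 1) ≤ ∑ i ∈ s, (T + 1 - #s) * (x i - 1) :=
        sum_le_sum fun i hi => mul_le_mul_of_nonneg_right (hle i hi) (by linarith [hx i hi])
    _ = (T + 1 - #s) * (T - #s) := by simp [← mul_sum, sum_sub_distrib, T]

lemma dheight_zero (w : List Bool) : dheight w 0 = 0 := by simp [dheight]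

lemma dheight_succ (w : List Bool) {k : ℕ} (hk : k < w.length) :
    dheight w (k + 1) = dheight w k + if w[k] then 1 else -1 := by
  unfold dheight
  rw [List.take_add_one, List.map_append, List.sum_append, List.getElem?_eq_getElem hk]
  simp

lemma abs_dheight_succ_sub_le (w : List Bool) (k : ℕ) :
    |dheight w (k + 1) - dheight w k| ≤ 1 := by
  rcases lt_or_ge k w.length with hk | hk
  · rw [dheight_succ w hk]
    split <;> simp
  · simp [dheight, List.take_of_length_le hk, List.take_of_length_le (hk.trans k.le_succ)]

lemma even_dheight_add (w : List Bool) {k : ℕ} (hk : k ≤ w.length) : Even (dheight w k + k) := by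
  induction k with
  | zero => simp [dheight_zero]
  | succ n ih =>
    rw [dheight_succ w (by omega), Nat.cast_succ]
    obtain ⟨t, ht⟩ := ih (by omega)
    split
    · exact ⟨t + 1, by linarith⟩
    · exact ⟨t, by linarith⟩

lemma even_of_dheight_eq_zero (w : List Bool) {k : ℕ} (hk : k ≤ w.length)
    (h : dheight w k = 0) : Even k := by
  simpa [h] using even_dheight_add w hk

lemma sum_dheight_Ioc_le (w : List Bool) {a b : ℕ} (hab : a ≤ b) (hb : b ≤ w.length)
    (ha0 : dheight w a = 0) (hb0 : dheight w b = 0) :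
    ∑ k ∈ Ioc a b, (dheight w k : ℝ) ≤ (((b : ℝ) - a) / 2) ^ 2 := by
  obtain ⟨c, rfl⟩ : ∃ c, b = a + 2 * c := by
    obtain ⟨x, hx⟩ := even_of_dheight_eq_zero w (hab.trans hb) ha0
    obtain ⟨y, hy⟩ := even_of_dheight_eq_zero w hb hb0
    exact ⟨y - x, by omega⟩
  have := sum_Ioc_le_sq_of_abs_succ_sub_le (abs_dheight_succ_sub_le w) ha0 hb0
  have hc : ((((a + 2 * c : ℕ) : ℝ) - a) / 2) = c := by push_cast; ring
  rw [hc]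
  exact_mod_cast this

lemma two_mul_darea_le (w : List Bool) {N : ℕ} (hlen : w.length = 2 * N) :
    2 * (darea w : ℝ) ≤ ∑ k ∈ Ioc 0 (2 * N), (dheight w k : ℝ) - N := by
  have hsum : ∑ k ∈ range w.length, dheight w (k + 1) = ∑ k ∈ Ioc 0 (2 * N), dheight w k := by
    rw [hlen, range_eq_Ico, sum_Ico_add' (fun k => dheight w k), ← Ico_add_one_add_one_eq_Ioc]
  have hfloor : 2 * darea w ≤ ∑ k ∈ Ioc 0 (2 * N), dheight w k - N := by
    unfold darea
    rw [hsum, hlen, Nat.cast_mul, Nat.cast_ofNat, Int.mul_ediv_cancel_left _ two_ne_zero]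
    exact Int.mul_ediv_self_le two_ne_zero
  exact_mod_cast hfloor

theorem area_deficit_bound_general (N m : ℕ) (w : List Bool)
    (hlen : w.length = 2 * N) (r : ℕ → ℕ)
    (hr0 : r 0 = 0) (hrm : r m = 2 * N)
    (hmono : StrictMonoOn r (Set.Icc 0 m))
    (hret : ∀ i, 1 ≤ i → i ≤ m → dheight w (r i) = 0) :
    (darea w : ℝ) ≤
        (1 / 2) * ∑ i ∈ Finset.Icc 1 m,
          (((r i : ℝ) - r (i - 1)) / 2) * ((((r i : ℝ) - r (i - 1)) / 2) - 1) ∧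
      (N : ℝ) * (N - 1) / 2 - (darea w : ℝ) ≥
        ((m : ℝ) - 1) * ((N : ℝ) - (m : ℝ) / 2) := by
  have hr_le (i : ℕ) (hi : i ≤ m) : r i ≤ w.length :=
    hlen ▸ hrm ▸ hmono.monotoneOn ⟨i.zero_le, hi⟩ ⟨m.zero_le, le_rfl⟩ hi
  have hret' (i : ℕ) (hi : i ≤ m) : dheight w (r i) = 0 := by
    rcases Nat.eq_zero_or_pos i with rfl | hpos
    · rw [hr0, dheight_zero]
    · exact hret i hpos hi
  have hlt (i : ℕ) (hi : i ∈ Icc 1 m) : r (i - 1) < r i := by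
    rw [mem_Icc] at hi
    exact hmono ⟨(i - 1).zero_le, by omega⟩ ⟨i.zero_le, hi.2⟩ (by omega)
  set k : ℕ → ℝ := fun i => ((r i : ℝ) - r (i - 1)) / 2 with hk
  have hk_sum : ∑ i ∈ Icc 1 m, k i = N := by
    rw [hk, ← sum_div, sum_Icc_sub_pred (fun i => (r i : ℝ)), hrm, hr0]
    push_cast
    ring
  have hk_one (i : ℕ) (hi : i ∈ Icc 1 m) : 1 ≤ k i := by
    rw [mem_Icc] at hi
    have hgap : r (i - 1) + 2 ≤ r i := by
      obtain ⟨x, hx⟩ := even_of_dheight_eq_zero w (hr_le (i - 1) (by omega)) (hret' _ (by omega))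
      obtain ⟨y, hy⟩ := even_of_dheight_eq_zero w (hr_le i hi.2) (hret' i hi.2)
      have := hlt i (mem_Icc.mpr hi)
      omega
    have : (r (i - 1) : ℝ) + 2 ≤ r i := by exact_mod_cast hgap
    simp only [hk]
    linarith
  have harea : (darea w : ℝ) ≤ 1 / 2 * ∑ i ∈ Icc 1 m, k i * (k i - 1) := by
    have hblocks : ∑ j ∈ Ioc 0 (2 * N), (dheight w j : ℝ) ≤ ∑ i ∈ Icc 1 m, k i ^ 2 := by
      rw [← hr0, ← hrm, ← sum_Ioc_eq_sum_Icc_sum_Ioc _ hmono.monotoneOn]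
      refine sum_le_sum fun i hi => ?_
      have hi' := mem_Icc.mp hi
      exact sum_dheight_Ioc_le w (hlt i hi).le (hr_le i hi'.2) (hret' _ (by omega)) (hret' i hi'.2)
    have hexpand : ∑ i ∈ Icc 1 m, k i * (k i - 1) = ∑ i ∈ Icc 1 m, k i ^ 2 - N := by
      rw [← hk_sum, ← sum_sub_distrib]
      exact sum_congr rfl fun i _ => by ring
    linarith [two_mul_darea_le w hlen]
  refine ⟨harea, ?_⟩
  have hconvex := sum_mul_sub_one_le (Icc 1 m) k hk_one
  rw [hk_sum, Nat.card_Icc, Nat.add_sub_cancel] at hconvex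
  linarith

/-- For a Dyck path of semi-length `N` with exactly `m` returns at positions
`0 = r_0 < r_1 < ... < r_m = 2N`, with `k_i = (r_i − r_{i−1})/2`, the area
satisfies `a(w) ≤ (1/2)∑ k_i(k_i − 1)`, and hence
`N(N−1)/2 − a(w) ≥ (m−1)(N − m/2)`. -/
theorem area_deficit_bound (N m : ℕ) (hm : 1 ≤ m) (w : List Bool)
    (hlen : w.length = 2 * N) (hw : IsDyck w) (r : ℕ → ℕ)
    (hr0 : r 0 = 0) (hrm : r m = 2 * N)
    (hmono : StrictMonoOn r (Set.Icc 0 m))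
    (hret : ∀ i, 1 ≤ i → i ≤ m → dheight w (r i) = 0)
    (hcount : dreturns w = m) :
    (darea w : ℝ) ≤
        (1 / 2) * ∑ i ∈ Finset.Icc 1 m,
          (((r i : ℝ) - r (i - 1)) / 2) * ((((r i : ℝ) - r (i - 1)) / 2) - 1) ∧
      (N : ℝ) * (N - 1) / 2 - (darea w : ℝ) ≥
        ((m : ℝ) - 1) * ((N : ℝ) - (m : ℝ) / 2) :=
  area_deficit_bound_general N m w hlen r hr0 hrm hmono hret
end

section
/- For q > 1, the ratio q^{N−1}·C_{N−1}(q) / C_N(q) converges to 1 as N → ∞, where C_N(q) is the Carlitz–Riordan q-Catalan number. -/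
open Finset

/-!
Cutting a Dyck path at its first return, `U u D v`, gives the recurrence
`C_{n+1} = ∑_{k+j=n} q^k C_k C_j`. Its term `k = n` is `q^n C_n`, so `q^n C_n / C_{n+1} ≤ 1`.
Write `C_m = q^(m choose 2) D_m`. Then `D` is nondecreasing (`C_{m+1} ≥ q^m C_m`) and
`D_m ≤ catalan m ≤ 4^m`, and the term `(k, j)` equals `q^(n choose 2 + n) q^{-j(k+1)} D_k D_j`.
Bounding the factor `D` with the smaller index by `4^min(k,j)` and the other by `D_n` shows that
every term with `j ≥ 1` is at most `q^n C_n / q^{n/2}` once `q^{n/2} ≥ 4`. Hence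
`C_{n+1} ≤ (1 + n q^{-n/2}) q^n C_n`, and so the ratio tends to `1`.
-/

open DyckStep Filter Topology

lemma Nat.choose_two_add (a b : ℕ) : (a + b).choose 2 = a.choose 2 + b.choose 2 + a * b := by
  induction b with
  | zero => simp
  | succ b ih =>
    rw [← add_assoc, Nat.choose_succ_succ', Nat.choose_succ_succ', ih, Nat.choose_one_right,
      Nat.choose_one_right]
    ring

lemma catalan_le_four_pow (n : ℕ) : catalan n ≤ 4 ^ n :=
  calc catalan n ≤ (n + 1) * catalan n := Nat.le_mul_of_pos_left _ n.succ_pos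
    _ = n.centralBinom := succ_mul_catalan_eq_centralBinom n
    _ ≤ 4 ^ n := Nat.centralBinom_le_four_pow n

structure IsQCatalanSeq (q : ℝ) (C : ℕ → ℝ) : Prop where
  zero : C 0 = 1
  succ (n : ℕ) : C (n + 1) = ∑ ij ∈ antidiagonal n, q ^ ij.1 * C ij.1 * C ij.2

namespace IsQCatalanSeq

variable {q : ℝ} {C : ℕ → ℝ}

lemma pos (hC : IsQCatalanSeq q C) (hq : 0 < q) (n : ℕ) : 0 < C n := by
  induction n using Nat.strong_induction_on with
  | _ n ih =>
    rcases n with _ | n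
    · rw [hC.zero]
      exact one_pos
    · rw [hC.succ]
      refine sum_pos (fun ij hij => ?_) ⟨(n, 0), by simp⟩
      have hij := mem_antidiagonal.1 hij
      have := ih ij.1 (by omega)
      have := ih ij.2 (by omega)
      positivity

lemma pow_mul_le_succ (hC : IsQCatalanSeq q C) (hq : 0 < q) (n : ℕ) :
    q ^ n * C n ≤ C (n + 1) := by
  rw [hC.succ]
  calc q ^ n * C n = q ^ n * C n * C 0 := by rw [hC.zero, mul_one]
    _ ≤ _ := single_le_sum (f := fun ij : ℕ × ℕ => q ^ ij.1 * C ij.1 * C ij.2)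
        (fun ij _ => (mul_pos (mul_pos (pow_pos hq _) (hC.pos hq _)) (hC.pos hq _)).le)
        (by simp : (n, 0) ∈ antidiagonal n)

lemma pow_choose_two_mul_le (hC : IsQCatalanSeq q C) (hq : 0 < q) {m n : ℕ} (hmn : m ≤ n) :
    q ^ n.choose 2 * C m ≤ q ^ m.choose 2 * C n := by
  induction n, hmn using Nat.le_induction with
  | base => rfl
  | succ n hmn ih =>
    calc q ^ (n + 1).choose 2 * C m = q ^ n * (q ^ n.choose 2 * C m) := by
          rw [Nat.choose_succ_succ', Nat.choose_one_right, pow_add]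
          ring
      _ ≤ q ^ n * (q ^ m.choose 2 * C n) := by gcongr
      _ = q ^ m.choose 2 * (q ^ n * C n) := by ring
      _ ≤ q ^ m.choose 2 * C (n + 1) := by gcongr; exact hC.pow_mul_le_succ hq n

lemma le_catalan_mul (hC : IsQCatalanSeq q C) (hq : 1 ≤ q) (n : ℕ) :
    C n ≤ catalan n * q ^ n.choose 2 := by
  induction n using Nat.strong_induction_on with
  | _ n ih =>
    rcases n with _ | n
    · simp [hC.zero]
    rw [hC.succ, catalan_succ', Nat.cast_sum, sum_mul]
    refine sum_le_sum fun ij hij => ?_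
    obtain ⟨k, j⟩ := ij
    have hkj : k + j = n := mem_antidiagonal.1 hij
    have hexp : k + k.choose 2 + j.choose 2 ≤ (n + 1).choose 2 := by
      rw [← hkj, Nat.choose_two_add (k + j) 1, Nat.choose_two_add k j]
      simp only [Nat.choose_succ_self, mul_one, add_zero]
      nlinarith
    have := hC.pos (by linarith) j
    calc q ^ k * C k * C j
        ≤ q ^ k * (catalan k * q ^ k.choose 2) * (catalan j * q ^ j.choose 2) := by
          gcongr
          exacts [ih k (by omega), ih j (by omega)]
      _ = catalan k * catalan j * q ^ (k + k.choose 2 + j.choose 2) := by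
          rw [pow_add, pow_add]
          ring
      _ ≤ catalan k * catalan j * q ^ (n + 1).choose 2 := by gcongr
      _ = ((catalan k * catalan j : ℕ) : ℝ) * q ^ (n + 1).choose 2 := by push_cast; ring

lemma mul_le_four_pow_min_mul (hC : IsQCatalanSeq q C) (hq : 1 ≤ q) {k j n : ℕ}
    (h : k + j = n) :
    q ^ n.choose 2 * (C k * C j) ≤ 4 ^ min k j * q ^ (k.choose 2 + j.choose 2) * C n := by
  wlog hkj : k ≤ j generalizing k j
  · have := this (k := j) (j := k) (by omega) (by omega)
    rwa [mul_comm (C j), min_comm, add_comm (j.choose 2)] at this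
  have hk : C k ≤ 4 ^ k * q ^ k.choose 2 := (hC.le_catalan_mul hq k).trans <| by
    gcongr
    exact_mod_cast catalan_le_four_pow k
  have hj : q ^ n.choose 2 * C j ≤ q ^ j.choose 2 * C n :=
    hC.pow_choose_two_mul_le (by linarith) (by omega)
  have := hC.pos (by linarith) j
  calc q ^ n.choose 2 * (C k * C j) = C k * (q ^ n.choose 2 * C j) := by ring
    _ ≤ (4 ^ k * q ^ k.choose 2) * (q ^ j.choose 2 * C n) := by gcongr
    _ = 4 ^ min k j * q ^ (k.choose 2 + j.choose 2) * C n := by rw [min_eq_left hkj, pow_add]; ring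

lemma sqrt_pow_mul_le (hC : IsQCatalanSeq q C) (hq : 1 ≤ q) {k j n : ℕ} (h : k + j = n)
    (hj : 0 < j) (h4 : 4 ≤ √q ^ n) : √q ^ n * (q ^ k * C k * C j) ≤ q ^ n * C n := by
  set s := √q
  have hqs : q = s ^ 2 := (Real.sq_sqrt (by linarith)).symm
  have hs : 1 ≤ s := Real.one_le_sqrt.2 hq
  have hexp : n + 2 * k + n * min k j ≤ 2 * n + 2 * (k * j) := by
    rcases le_total k j with hkj | hkj
    · rw [min_eq_left hkj]; subst h; nlinarith
    · rw [min_eq_right hkj]; subst h; nlinarith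
  have := hC.pos (by linarith) k
  have := hC.pos (by linarith) j
  have := hC.pos (by linarith) n
  refine le_of_mul_le_mul_left ?_ (pow_pos (by linarith : 0 < q) (n.choose 2))
  calc q ^ n.choose 2 * (s ^ n * (q ^ k * C k * C j))
        = s ^ n * q ^ k * (q ^ n.choose 2 * (C k * C j)) := by ring
    _ ≤ s ^ n * q ^ k * (4 ^ min k j * q ^ (k.choose 2 + j.choose 2) * C n) :=
        mul_le_mul_of_nonneg_left (hC.mul_le_four_pow_min_mul hq h) (by positivity)
    _ ≤ s ^ n * q ^ k * ((s ^ n) ^ min k j * q ^ (k.choose 2 + j.choose 2) * C n) := by gcongr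
    _ = s ^ (n + 2 * k + n * min k j) * q ^ (k.choose 2 + j.choose 2) * C n := by
        rw [hqs]; ring
    _ ≤ s ^ (2 * n + 2 * (k * j)) * q ^ (k.choose 2 + j.choose 2) * C n := by gcongr
    _ = q ^ n.choose 2 * (q ^ n * C n) := by rw [← h, Nat.choose_two_add, hqs]; ring

lemma succ_le_one_add_mul (hC : IsQCatalanSeq q C) (hq : 1 ≤ q) {n : ℕ} (h4 : 4 ≤ √q ^ n) :
    C (n + 1) ≤ (1 + n / √q ^ n) * (q ^ n * C n) := by
  have hmem : (n, 0) ∈ antidiagonal n := by simp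
  have hterm : ∀ ij ∈ (antidiagonal n).erase (n, 0),
      q ^ ij.1 * C ij.1 * C ij.2 ≤ q ^ n * C n / √q ^ n := by
    intro ij hij
    obtain ⟨hne, hij⟩ := mem_erase.1 hij
    have hij := mem_antidiagonal.1 hij
    have hj : 0 < ij.2 := by
      rcases ij with ⟨k, _ | j⟩
      · simp_all
      · omega
    rw [le_div_iff₀ (by positivity), mul_comm]
    exact hC.sqrt_pow_mul_le hq hij hj h4
  rw [hC.succ, ← add_sum_erase _ _ hmem]
  calc q ^ n * C n * C 0 + ∑ ij ∈ (antidiagonal n).erase (n, 0), q ^ ij.1 * C ij.1 * C ij.2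
      ≤ q ^ n * C n + #((antidiagonal n).erase (n, 0)) • (q ^ n * C n / √q ^ n) := by
        rw [hC.zero, mul_one]
        exact add_le_add le_rfl (sum_le_card_nsmul _ _ _ hterm)
    _ = (1 + n / √q ^ n) * (q ^ n * C n) := by
        rw [card_erase_of_mem hmem, Nat.card_antidiagonal, Nat.add_sub_cancel, nsmul_eq_mul]
        ring

lemma tendsto_pow_mul_div_succ (hC : IsQCatalanSeq q C) (hq : 1 < q) :
    Tendsto (fun n => q ^ n * C n / C (n + 1)) atTop (𝓝 1) := by
  have hs : 1 < √q := Real.lt_sqrt_of_sq_lt (by simpa using hq)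
  have hlim : Tendsto (fun n : ℕ => 1 / (1 + n / √q ^ n)) atTop (𝓝 1) := by
    have := (tendsto_pow_const_div_const_pow_of_one_lt 1 hs).const_add (1 : ℝ)
    simpa using this.inv₀ (by norm_num)
  refine tendsto_of_tendsto_of_tendsto_of_le_of_le' hlim tendsto_const_nhds ?_ ?_
  · filter_upwards [(tendsto_pow_atTop_atTop_of_one_lt hs).eventually_ge_atTop 4] with n h4
    have := hC.pos (by linarith) n
    rw [div_le_div_iff₀ (by positivity) (hC.pos (by linarith) (n + 1))]
    linarith [hC.succ_le_one_add_mul hq.le h4]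
  · exact Eventually.of_forall fun n =>
      (div_le_one (hC.pos (by linarith) _)).2 (hC.pow_mul_le_succ (by linarith) n)

end IsQCatalanSeq

lemma dheight_cons_succ (b : Bool) (w : List Bool) (k : ℕ) :
    dheight (b :: w) (k + 1) = (if b then 1 else -1) + dheight w k := by
  simp [dheight]

lemma dheight_append (u v : List Bool) (k : ℕ) :
    dheight (u ++ v) k = dheight u k + dheight v (k - u.length) := by
  simp [dheight, List.take_append]

lemma dheight_of_length_le {w : List Bool} {k : ℕ} (hk : w.length ≤ k) :
    dheight w k = dheight w w.length := by
  simp [dheight, List.take_of_length_le hk]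

def heightSum (w : List Bool) : ℤ := ∑ k ∈ range w.length, dheight w (k + 1)

lemma heightSum_cons (b : Bool) (w : List Bool) :
    heightSum (b :: w) = (w.length + 1) * (if b then 1 else -1) + heightSum w := by
  simp only [heightSum, List.length_cons, dheight_cons_succ, sum_add_distrib, sum_const,
    card_range, nsmul_eq_mul, Nat.cast_add, Nat.cast_one]
  rw [sum_range_succ']
  simp [dheight]

lemma heightSum_append (u v : List Bool) :
    heightSum (u ++ v) = heightSum u + v.length * dheight u u.length + heightSum v := by
  rw [heightSum, List.length_append, sum_range_add]
  have hleft : ∀ k ∈ range u.length, dheight (u ++ v) (k + 1) = dheight u (k + 1) := by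
    intro k hk
    rw [dheight_append, Nat.sub_eq_zero_of_le (mem_range.1 hk)]
    simp [dheight]
  have hright : ∀ j ∈ range v.length,
      dheight (u ++ v) (u.length + j + 1) = dheight u u.length + dheight v (j + 1) := by
    intro j _
    rw [dheight_append, dheight_of_length_le (by omega)]
    congr 2
    omega
  rw [sum_congr rfl hleft, sum_congr rfl hright, sum_add_distrib, sum_const, card_range,
    nsmul_eq_mul, heightSum, heightSum]
  ring

def DyckStep.toBool : DyckStep → Bool
  | U => true
  | D => false

def DyckStep.ofBool : Bool → DyckStep
  | true => U
  | false => D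

lemma DyckStep.toBool_ofBool (b : Bool) : (ofBool b).toBool = b := by cases b <;> rfl

lemma DyckStep.toBool_injective : Function.Injective DyckStep.toBool := by
  intro a b h; cases a <;> cases b <;> first | rfl | cases h

lemma sum_map_ite_toBool (l : List DyckStep) :
    (l.map fun s => if s.toBool then (1 : ℤ) else -1).sum = l.count U - l.count D := by
  induction l with
  | nil => simp
  | cons s l ih =>
    rw [List.map_cons, List.sum_cons, ih, List.count_cons, List.count_cons]
    cases s <;> simp [DyckStep.toBool] <;> ring

lemma dheight_map_toBool (l : List DyckStep) (k : ℕ) :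
    dheight (l.map toBool) k = (l.take k).count U - (l.take k).count D := by
  rw [dheight, ← List.map_take, List.map_map]
  exact sum_map_ite_toBool _

lemma isDyck_map_toBool_iff (l : List DyckStep) :
    IsDyck (l.map toBool) ↔
      l.count U = l.count D ∧ ∀ i, (l.take i).count D ≤ (l.take i).count U := by
  simp only [IsDyck, mem_range, List.length_map, dheight_map_toBool, List.take_length, sub_nonneg,
    sub_eq_zero, Nat.cast_le, Nat.cast_inj, Nat.lt_succ_iff]
  refine ⟨fun ⟨hpre, hend⟩ => ⟨hend, fun i => ?_⟩,
    fun ⟨hend, hpre⟩ => ⟨fun k _ => hpre k, hend⟩⟩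
  rcases le_total i l.length with hi | hi
  · exact hpre i hi
  · rw [List.take_of_length_le hi]
    simpa using hpre l.length le_rfl

namespace DyckWord

def toBoolList (p : DyckWord) : List Bool := p.toList.map toBool

lemma isDyck_toBoolList (p : DyckWord) : IsDyck p.toBoolList :=
  (isDyck_map_toBool_iff _).2 ⟨p.count_U_eq_count_D, p.count_D_le_count_U⟩

lemma length_toBoolList (p : DyckWord) : p.toBoolList.length = 2 * p.semilength := by
  rw [toBoolList, List.length_map, two_mul_semilength_eq_length]

lemma toBoolList_injective : Function.Injective toBoolList := fun _ _ h =>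
  DyckWord.ext ((List.map_injective_iff.2 DyckStep.toBool_injective) h)

def ofIsDyck (w : List Bool) (hw : IsDyck w) : DyckWord :=
  have hw' : IsDyck ((w.map ofBool).map toBool) := by simpa [Function.comp_def, toBool_ofBool]
  ⟨w.map ofBool, ((isDyck_map_toBool_iff _).1 hw').1, ((isDyck_map_toBool_iff _).1 hw').2⟩

lemma toBoolList_ofIsDyck (w : List Bool) (hw : IsDyck w) :
    (ofIsDyck w hw).toBoolList = w := by
  simp [toBoolList, ofIsDyck, Function.comp_def, toBool_ofBool]

@[elab_as_elim]
theorem induction_nest_add {motive : DyckWord → Prop} (zero : motive 0)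
    (nest_add : ∀ u v, motive u → motive v → motive (u.nest + v)) (p : DyckWord) :
    motive p := by
  induction hn : p.semilength using Nat.strong_induction_on generalizing p with
  | _ n ih =>
    rcases eq_or_ne p 0 with rfl | hp
    · exact zero
    · rw [← nest_insidePart_add_outsidePart hp]
      exact nest_add _ _ (ih _ (hn ▸ semilength_insidePart_lt hp) _ rfl)
        (ih _ (hn ▸ semilength_outsidePart_lt hp) _ rfl)

lemma toBoolList_nest_add (u v : DyckWord) :
    (u.nest + v).toBoolList = true :: (u.toBoolList ++ false :: v.toBoolList) := by
  change (([U] ++ u.toList ++ [D]) ++ v.toList).map toBool = _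
  simp [toBoolList, DyckStep.toBool]

lemma heightSum_nest_add (u v : DyckWord) :
    heightSum (u.nest + v).toBoolList =
      heightSum u.toBoolList + heightSum v.toBoolList + 2 * u.semilength + 1 := by
  rw [toBoolList_nest_add, heightSum_cons, heightSum_append, heightSum_cons,
    u.isDyck_toBoolList.2]
  simp only [List.length_cons, List.length_append, length_toBoolList]
  push_cast
  ring

def area (p : DyckWord) : ℕ := (darea p.toBoolList).toNat

-- In particular the divisions in `darea` are exact and `darea` is nonnegative on Dyck paths.
lemma two_mul_area_add_semilength (p : DyckWord) :
    2 * (p.area : ℤ) + p.semilength = heightSum p.toBoolList := by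
  obtain ⟨a, ha⟩ : ∃ a : ℕ, heightSum p.toBoolList = 2 * a + p.semilength := by
    induction p using induction_nest_add with
    | zero => exact ⟨0, rfl⟩
    | nest_add u v hu hv =>
      obtain ⟨a, ha⟩ := hu
      obtain ⟨b, hb⟩ := hv
      refine ⟨a + b + u.semilength, ?_⟩
      rw [heightSum_nest_add, ha, hb, semilength_add, semilength_nest]
      push_cast
      ring
  have : darea p.toBoolList = a := by
    rw [darea, ← heightSum, ha, length_toBoolList]
    omega
  rw [area, this, ha]
  simp

lemma area_nest_add (u v : DyckWord) : (u.nest + v).area = u.area + v.area + u.semilength := by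
  have h := two_mul_area_add_semilength (u.nest + v)
  rw [heightSum_nest_add, ← two_mul_area_add_semilength, ← two_mul_area_add_semilength,
    semilength_add, semilength_nest] at h
  push_cast at h
  omega

def dyckWords (n : ℕ) : Finset DyckWord :=
  univ.map (Function.Embedding.subtype fun p : DyckWord => p.semilength = n)

@[simp]
lemma mem_dyckWords {n : ℕ} {p : DyckWord} : p ∈ dyckWords n ↔ p.semilength = n := by
  simp [dyckWords]

lemma sum_dyckWords_succ {M : Type*} [AddCommMonoid M] (f : DyckWord → M) (n : ℕ) :
    ∑ p ∈ dyckWords (n + 1), f p =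
      ∑ ij ∈ antidiagonal n, ∑ u ∈ dyckWords ij.1, ∑ v ∈ dyckWords ij.2,
        f (u.nest + v) := by
  simp_rw [← sum_product' (f := fun u v : DyckWord => f (u.nest + v))]
  rw [sum_sigma' (antidiagonal n) (fun ij => dyckWords ij.1 ×ˢ dyckWords ij.2)
    (fun _ x => f (x.1.nest + x.2))]
  symm
  refine sum_nbij' (fun x => x.2.1.nest + x.2.2)
    (fun p => ⟨(p.insidePart.semilength, p.outsidePart.semilength),
      (p.insidePart, p.outsidePart)⟩) ?_ ?_ ?_ ?_ (fun _ _ => rfl)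
  · rintro ⟨⟨a, b⟩, u, v⟩ hx
    simp only [mem_sigma, HasAntidiagonal.mem_antidiagonal, mem_product, mem_dyckWords] at hx
    simp only [mem_dyckWords, semilength_add, semilength_nest, hx.2.1, hx.2.2]
    omega
  · intro p hp
    have hp0 : p ≠ 0 := by rintro rfl; simp at hp
    have := semilength_insidePart_add_semilength_outsidePart_add_one hp0
    simp only [mem_sigma, HasAntidiagonal.mem_antidiagonal, mem_product, mem_dyckWords,
      and_true]
    rw [mem_dyckWords] at hp
    omega
  · rintro ⟨⟨a, b⟩, u, v⟩ hx
    simp only [mem_sigma, HasAntidiagonal.mem_antidiagonal, mem_product, mem_dyckWords] at hx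
    simp [hx.2.1, hx.2.2]
  · intro p hp
    have hp0 : p ≠ 0 := by rintro rfl; simp at hp
    exact nest_insidePart_add_outsidePart hp0

end DyckWord

open DyckWord

lemma Gqs_one_eq_sum_area (N : ℕ) (q : ℝ) : Gqs N q 1 = ∑ p ∈ dyckWords N, q ^ p.area := by
  classical
  simp only [Gqs, one_pow, mul_one]
  rw [← sum_filter]
  refine sum_bij' (fun f hf => ofIsDyck (List.ofFn f) (mem_filter.1 hf).2)
    (fun p hp k => p.toBoolList[k.1]'(by rw [length_toBoolList, mem_dyckWords.1 hp]; exact k.2))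
    ?_ ?_ ?_ ?_ ?_
  · intro f hf
    have := length_toBoolList (ofIsDyck (List.ofFn f) (mem_filter.1 hf).2)
    rw [toBoolList_ofIsDyck, List.length_ofFn] at this
    rw [mem_dyckWords]
    omega
  · intro p hp
    refine mem_filter.2 ⟨mem_univ _, ?_⟩
    convert p.isDyck_toBoolList
    apply List.ext_getElem <;> simp [length_toBoolList, mem_dyckWords.1 hp]
  · intro f _
    funext k
    simp [toBoolList_ofIsDyck]
  · intro p hp
    apply toBoolList_injective
    rw [toBoolList_ofIsDyck]
    apply List.ext_getElem <;> simp [length_toBoolList, mem_dyckWords.1 hp]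
  · intro f _
    simp [area, toBoolList_ofIsDyck]

lemma isQCatalanSeq_Gqs (q : ℝ) : IsQCatalanSeq q (Gqs · q 1) where
  zero := by simp [Gqs, IsDyck, dheight, darea]
  succ n := by
    rw [Gqs_one_eq_sum_area, sum_dyckWords_succ]
    refine sum_congr rfl fun ij _ => ?_
    rw [Gqs_one_eq_sum_area, Gqs_one_eq_sum_area, mul_assoc, sum_mul_sum, mul_sum]
    refine sum_congr rfl fun u hu => ?_
    rw [mul_sum]
    refine sum_congr rfl fun v _ => ?_
    rw [area_nest_add, mem_dyckWords.1 hu, pow_add, pow_add]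
    ring

/-- For `q > 1`, `q^{N−1} C_{N−1}(q)/C_N(q) → 1` as `N → ∞`, with
`C_N(q) = G_N(q,1)` the Carlitz–Riordan q-Catalan number. -/
theorem qCatalan_ratio_tendsto (q : ℝ) (hq : 1 < q) :
    Filter.Tendsto (fun N : ℕ => q ^ (N - 1) * Gqs (N - 1) q 1 / Gqs N q 1)
      Filter.atTop (nhds 1) := by
  rw [← Filter.tendsto_add_atTop_iff_nat 1]
  simpa using (isQCatalanSeq_Gqs q).tendsto_pow_mul_div_succ hq
end
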